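/- In diffusion on a finite graph, there exists a time T' such that for all t ≥ T', the label of every edge belongs to {(1,-1), (-1,1), (0,0)}. -/

import Mathlib

open Finset Classical

/-- One step of the diffusion process: each vertex gains one chip from each
neighbour with a strictly larger label and loses one chip to each neighbour
with a strictly smaller label. -/
noncomputable def diffStep {n : ℕ} (G : SimpleGraph (Fin n)) (w : Fin n → ℤ) : Fin n → ℤ :=
  fun v => w v + ((Finset.univ.filter fun u => G.Adj v u ∧ w v < w u).card : ℤ)
             - ((Finset.univ.filter fun u => G.Adj v u ∧ w u < w v).card : ℤ)

/-- The labelling at time `t` of the diffusion process started from `w0`. -/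
noncomputable def diff {n : ℕ} (G : SimpleGraph (Fin n)) (w0 : Fin n → ℤ) (t : ℕ) : Fin n → ℤ :=
  (diffStep G)^[t] w0

/-- The potential `P(t) = ∑_v w_v(t) · w_v(t+1)`. -/
noncomputable def pot {n : ℕ} (G : SimpleGraph (Fin n)) (w0 : Fin n → ℤ) (t : ℕ) : ℤ :=
  ∑ v, diff G w0 t v * diff G w0 (t + 1) v

/-- `x_{uv}(t) = sgn(w_u(t) - w_v(t))` for edges, `0` for non-edges. -/
noncomputable def xlab {n : ℕ} (G : SimpleGraph (Fin n)) (w0 : Fin n → ℤ)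
    (u v : Fin n) (t : ℕ) : ℤ :=
  if G.Adj u v then Int.sign (diff G w0 t u - diff G w0 t v) else 0

/-- `y_{uv}(t) = sgn(w_u(t+1) - w_v(t+1))` for edges, `0` for non-edges. -/
noncomputable def ylab {n : ℕ} (G : SimpleGraph (Fin n)) (w0 : Fin n → ℤ)
    (u v : Fin n) (t : ℕ) : ℤ :=
  if G.Adj u v then Int.sign (diff G w0 (t + 1) u - diff G w0 (t + 1) v) else 0

/-- The label `(x_{uv}(t), y_{uv}(t))` of the edge `uv` at time `t`. -/
noncomputable def elabel {n : ℕ} (G : SimpleGraph (Fin n)) (w0 : Fin n → ℤ)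
    (u v : Fin n) (t : ℕ) : ℤ × ℤ :=
  (xlab G w0 u v t, ylab G w0 u v t)

/-!
Write `a = w(t)`, `b = w(t+1)` and `c = w(t+2)`. Since `c - a` is the sum of the two diffusion
increments, `2 (P(t+1) - P(t))` is a sum over ordered adjacent pairs of the terms
`-d (sgn d + sgn d')` with `d = b_u - b_v`, `d' = a_u - a_v`, each of which is `≤ 0`.
So `P` is nonincreasing; it is bounded below by `-n³` because `|b_v - a_v| ≤ n`, hence
constant from some time `T` on. Then every term vanishes: whenever `b_u ≠ b_v` we get
`x_{uv}(t) = -y_{uv}(t) ≠ 0`, and whenever `a_u = a_v` also `b_u = b_v`. Thus after `T` an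
edge that is once level stays level, with label `(0,0)`, and an edge that never is has
label `(±1, ∓1)`.
-/

open Filter

def IsStableLabel (l : ℤ × ℤ) : Prop :=
  l = (1, -1) ∨ l = (-1, 1) ∨ l = (0, 0)

section EdgeSign

variable {V : Type*} (G : SimpleGraph V) (w : V → ℤ)

noncomputable def edgeSign (v u : V) : ℤ :=
  if G.Adj v u then (w u - w v).sign else 0

theorem edgeSign_swap (u v : V) : edgeSign G w u v = -edgeSign G w v u := by
  by_cases h : G.Adj v u
  · rw [edgeSign, edgeSign, if_pos h.symm, if_pos h, ← Int.sign_neg, neg_sub]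
  · rw [edgeSign, edgeSign, if_neg (fun h' => h h'.symm), if_neg h, neg_zero]

theorem abs_edgeSign_le_one (v u : V) : |edgeSign G w v u| ≤ 1 := by
  unfold edgeSign
  split_ifs
  · rcases Int.sign_trichotomy (w u - w v) with h | h | h <;> simp [h]
  · simp

end EdgeSign

theorem diffStep_apply {n : ℕ} (G : SimpleGraph (Fin n)) (w : Fin n → ℤ) (v : Fin n) :
    diffStep G w v = w v + ∑ u, edgeSign G w v u := by
  have hcount : ∀ u, (if G.Adj v u ∧ w v < w u then (1 : ℤ) else 0)
      - (if G.Adj v u ∧ w u < w v then 1 else 0) = edgeSign G w v u := by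
    intro u
    by_cases hadj : G.Adj v u
    · rcases lt_trichotomy (w v) (w u) with h | h | h
      · simp [edgeSign, hadj, h, h.not_gt, Int.sign_eq_one_of_pos (sub_pos.2 h)]
      · simp [edgeSign, hadj, h]
      · simp [edgeSign, hadj, h, h.not_gt, Int.sign_eq_neg_one_of_neg (sub_neg.2 h)]
    · simp [edgeSign, hadj]
  simp only [diffStep, card_filter, Nat.cast_sum, Nat.cast_ite, Nat.cast_one, Nat.cast_zero,
    ← hcount, sum_sub_distrib]
  ring

theorem abs_diffStep_sub_le {n : ℕ} (G : SimpleGraph (Fin n)) (w : Fin n → ℤ) (v : Fin n) :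
    |diffStep G w v - w v| ≤ n := by
  rw [diffStep_apply, add_sub_cancel_left]
  calc |∑ u, edgeSign G w v u| ≤ ∑ u, |edgeSign G w v u| := abs_sum_le_sum_abs _ _
    _ ≤ ∑ _u : Fin n, 1 := sum_le_sum fun u _ => abs_edgeSign_le_one G w v u
    _ = n := by simp

theorem diff_succ {n : ℕ} (G : SimpleGraph (Fin n)) (w0 : Fin n → ℤ) (t : ℕ) :
    diff G w0 (t + 1) = diffStep G (diff G w0 t) :=
  Function.iterate_succ_apply' _ _ _

theorem two_mul_sum_mul_sum_of_antisymm {V R : Type*} [Fintype V] [CommRing R] (b : V → R)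
    (F : V → V → R) (hF : ∀ u v, F u v = -F v u) :
    2 * ∑ v, b v * ∑ u, F v u = ∑ v, ∑ u, (b v - b u) * F v u := by
  have hswap : ∑ v, ∑ u, b u * F v u = -∑ v, b v * ∑ u, F v u := by
    rw [sum_comm]
    simp only [mul_sum, ← sum_neg_distrib]
    exact sum_congr rfl fun x _ => sum_congr rfl fun y _ => by rw [hF y x]; ring
  simp only [sub_mul, sum_sub_distrib, hswap, ← mul_sum]
  ring

theorem neg_mul_sign_add_nonpos (d x : ℤ) (hx : |x| ≤ 1) : -d * (d.sign + x) ≤ 0 := by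
  have habs : d * d.sign = |d| := by rw [Int.mul_sign_self, Int.natCast_natAbs]
  have hdx : -d * x ≤ |d| := by
    calc -d * x ≤ |-d * x| := le_abs_self _
      _ = |d| * |x| := by rw [abs_mul, abs_neg]
      _ ≤ |d| * 1 := mul_le_mul_of_nonneg_left hx (abs_nonneg d)
      _ = |d| := mul_one _
  linarith

theorem eq_neg_sign_of_neg_mul_sign_add_eq_zero {d x : ℤ} (hd : d ≠ 0)
    (h : -d * (d.sign + x) = 0) : x = -d.sign := by
  have := (mul_eq_zero.1 h).resolve_left (neg_ne_zero.2 hd)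
  omega

theorem neg_sq_le_mul_of_abs_sub_le {a b m : ℤ} (h : |b - a| ≤ m) : -m ^ 2 ≤ a * b := by
  obtain ⟨h₁, h₂⟩ := abs_le.1 h
  nlinarith [sq_nonneg (a + b)]

theorem Int.exists_forall_ge_eq_of_antitone {f : ℕ → ℤ} (hf : Antitone f) {m : ℤ}
    (hm : ∀ t, m ≤ f t) : ∃ T, ∀ t ≥ T, f t = f T := by
  obtain ⟨_, ⟨T, rfl⟩, hmin⟩ := Int.exists_least_of_bdd (P := (· ∈ Set.range f))
    ⟨m, by rintro _ ⟨t, rfl⟩; exact hm t⟩ ⟨f 0, 0, rfl⟩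
  exact ⟨T, fun t ht => le_antisymm (hf ht) (hmin _ ⟨t, rfl⟩)⟩

section Potential

variable {n : ℕ} (G : SimpleGraph (Fin n)) (w0 : Fin n → ℤ)

noncomputable def potChangeTerm (t : ℕ) (v u : Fin n) : ℤ :=
  (diff G w0 (t + 1) v - diff G w0 (t + 1) u) *
    (edgeSign G (diff G w0 (t + 1)) v u + edgeSign G (diff G w0 t) v u)

theorem two_mul_pot_succ_sub (t : ℕ) :
    2 * (pot G w0 (t + 1) - pot G w0 t) = ∑ v, ∑ u, potChangeTerm G w0 t v u := by
  have hincr : ∀ v, diff G w0 (t + 2) v - diff G w0 t v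
      = ∑ u, (edgeSign G (diff G w0 (t + 1)) v u + edgeSign G (diff G w0 t) v u) := by
    intro v
    rw [sum_add_distrib, diff_succ, diffStep_apply, diff_succ, diffStep_apply]
    ring
  have hpot : pot G w0 (t + 1) - pot G w0 t
      = ∑ v, diff G w0 (t + 1) v * (diff G w0 (t + 2) v - diff G w0 t v) := by
    simp only [pot, ← sum_sub_distrib, mul_sub]
    exact sum_congr rfl fun v _ => by ring
  simp only [hpot, hincr]
  exact two_mul_sum_mul_sum_of_antisymm _ _ fun u v => by
    rw [edgeSign_swap, edgeSign_swap G (diff G w0 t)]; ring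

theorem potChangeTerm_nonpos (t : ℕ) (v u : Fin n) : potChangeTerm G w0 t v u ≤ 0 := by
  unfold potChangeTerm
  by_cases hadj : G.Adj v u
  · have h := neg_mul_sign_add_nonpos (diff G w0 (t + 1) u - diff G w0 (t + 1) v)
      (edgeSign G (diff G w0 t) v u) (abs_edgeSign_le_one _ _ _ _)
    have hb : edgeSign G (diff G w0 (t + 1)) v u
        = (diff G w0 (t + 1) u - diff G w0 (t + 1) v).sign := if_pos hadj
    rwa [hb, ← neg_sub]
  · simp [edgeSign, hadj]

theorem pot_antitone : Antitone (pot G w0) := by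
  refine antitone_nat_of_succ_le fun t => ?_
  have h := two_mul_pot_succ_sub G w0 t
  have hle : ∑ v, ∑ u, potChangeTerm G w0 t v u ≤ 0 :=
    sum_nonpos fun v _ => sum_nonpos fun u _ => potChangeTerm_nonpos G w0 t v u
  omega

theorem neg_cube_le_pot (t : ℕ) : -(n : ℤ) ^ 3 ≤ pot G w0 t := by
  calc -(n : ℤ) ^ 3 = ∑ _v : Fin n, -(n : ℤ) ^ 2 := by simp; ring
    _ ≤ pot G w0 t := sum_le_sum fun v _ => neg_sq_le_mul_of_abs_sub_le <| by
        rw [diff_succ]; exact abs_diffStep_sub_le G _ v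

theorem pot_eventually_const : ∃ T, ∀ t ≥ T, pot G w0 (t + 1) = pot G w0 t := by
  obtain ⟨T, hT⟩ := Int.exists_forall_ge_eq_of_antitone (pot_antitone G w0) (neg_cube_le_pot G w0)
  exact ⟨T, fun t ht => (hT (t + 1) (by omega)).trans (hT t ht).symm⟩

variable {G w0}

theorem sign_eq_neg_of_pot_succ_eq {t : ℕ} (hpot : pot G w0 (t + 1) = pot G w0 t)
    {u v : Fin n} (hadj : G.Adj u v) (hne : diff G w0 (t + 1) u ≠ diff G w0 (t + 1) v) :
    (diff G w0 t u - diff G w0 t v).sign = -(diff G w0 (t + 1) u - diff G w0 (t + 1) v).sign := by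
  have hsum := two_mul_pot_succ_sub G w0 t
  rw [hpot, sub_self, mul_zero, eq_comm] at hsum
  have hzero : potChangeTerm G w0 t v u = 0 := by
    rw [Fintype.sum_eq_zero_iff_of_nonpos fun v =>
      sum_nonpos fun u _ => potChangeTerm_nonpos G w0 t v u] at hsum
    have hrow := congrFun hsum v
    rw [Pi.zero_apply, Fintype.sum_eq_zero_iff_of_nonpos fun u =>
      potChangeTerm_nonpos G w0 t v u] at hrow
    exact congrFun hrow u
  rw [potChangeTerm, edgeSign, edgeSign, if_pos hadj.symm, if_pos hadj.symm,
    ← neg_sub (diff G w0 (t + 1) u)] at hzero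
  exact eq_neg_sign_of_neg_mul_sign_add_eq_zero (sub_ne_zero.2 hne) hzero

theorem diff_succ_eq_of_pot_succ_eq {t : ℕ} (hpot : pot G w0 (t + 1) = pot G w0 t)
    {u v : Fin n} (hadj : G.Adj u v) (heq : diff G w0 t u = diff G w0 t v) :
    diff G w0 (t + 1) u = diff G w0 (t + 1) v := by
  by_contra hne
  have h := sign_eq_neg_of_pot_succ_eq hpot hadj hne
  rw [heq, sub_self, Int.sign_zero, zero_eq_neg, Int.sign_eq_zero_iff_zero, sub_eq_zero] at h
  exact hne h

end Potential

theorem eventually_isStableLabel {n : ℕ} (G : SimpleGraph (Fin n)) (w0 : Fin n → ℤ)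
    {u v : Fin n} (hadj : G.Adj u v) : ∀ᶠ t in atTop, IsStableLabel (elabel G w0 u v t) := by
  obtain ⟨T, hT⟩ := pot_eventually_const G w0
  by_cases hlevel : ∃ t₀ ≥ T, diff G w0 t₀ u = diff G w0 t₀ v
  · obtain ⟨t₀, ht₀, heq⟩ := hlevel
    have hstays : ∀ t ≥ t₀, diff G w0 t u = diff G w0 t v := fun t ht => by
      induction t, ht using Nat.le_induction with
      | base => exact heq
      | succ s hs ih => exact diff_succ_eq_of_pot_succ_eq (hT s (ht₀.trans hs)) hadj ih
    filter_upwards [eventually_ge_atTop t₀] with t ht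
    simp [IsStableLabel, elabel, xlab, ylab, hstays t ht, hstays (t + 1) (by omega)]
  · push Not at hlevel
    filter_upwards [eventually_ge_atTop T] with t ht
    have hne := hlevel (t + 1) (by omega)
    have hsign : (diff G w0 (t + 1) u - diff G w0 (t + 1) v).sign ≠ 0 :=
      fun h => hne (sub_eq_zero.1 (Int.sign_eq_zero_iff_zero.1 h))
    simp only [IsStableLabel, elabel, xlab, ylab, if_pos hadj,
      sign_eq_neg_of_pot_succ_eq (hT t ht) hadj hne]
    rcases Int.sign_trichotomy (diff G w0 (t + 1) u - diff G w0 (t + 1) v) with h | h | h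
    · simp [h]
    · exact absurd h hsign
    · simp [h]

theorem stmt12 {n : ℕ} (G : SimpleGraph (Fin n)) (w0 : Fin n → ℤ) :
    ∃ T' : ℕ, ∀ t : ℕ, T' ≤ t → ∀ u v : Fin n, u < v → G.Adj u v →
      elabel G w0 u v t = ((1 : ℤ), (-1 : ℤ)) ∨
        elabel G w0 u v t = ((-1 : ℤ), (1 : ℤ)) ∨
        elabel G w0 u v t = ((0 : ℤ), (0 : ℤ)) := by
  have hall : ∀ᶠ t in atTop, ∀ u v : Fin n, G.Adj u v → IsStableLabel (elabel G w0 u v t) :=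
    eventually_all.2 fun u => eventually_all.2 fun v => by
      by_cases hadj : G.Adj u v
      · exact (eventually_isStableLabel G w0 hadj).mono fun _ h _ => h
      · exact Eventually.of_forall fun _ h => absurd h hadj
  obtain ⟨T', hT'⟩ := eventually_atTop.1 hall
  exact ⟨T', fun t ht u v _ hadj => hT' t ht u v hadj⟩
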